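/- arXiv:1007.2836 — 2 statements merged into one kernel-verified Lean document; each statement's English description precedes it below -/
import Mathlib

section
/- Let N ≥ 0 and φ_0,…,φ_N smooth real-valued functions on the unit disc with φ_i(0) ≠ 0 for some i; set g(t) = ∑_{i=0}^N (log|t|²)^i φ_i(t), assume g > 0 on the punctured disc, and let ℓ = max{i : φ_i(0) ≠ 0}. Then there exists a constant C > 0 such that |∂_t log g(t)| ≤ C/(|t|·(−log|t|)) for all t in some punctured neighborhood of 0. -/
open Complex Metric Filter Topology

/-- Wirtinger derivative ∂_t f = (1/2)(∂_x f - i ∂_y f). -/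
noncomputable def wd (f : ℂ → ℂ) (t : ℂ) : ℂ :=
  (1 / 2) * (fderiv ℝ f t 1 - Complex.I * fderiv ℝ f t Complex.I)

lemma aux_deriv (N : ℕ) (φ : ℕ → ℂ → ℝ)
    (hφ : ∀ i ≤ N, ContDiffOn ℝ (⊤ : ℕ∞) (φ i) (ball (0:ℂ) 1))
    (g : ℂ → ℝ)
    (hg : ∀ t ∈ ball (0:ℂ) 1 \ {0},
      g t = ∑ i ∈ Finset.range (N + 1), Real.log (‖t‖ ^ 2) ^ i * φ i t)
    (hpos : ∀ t ∈ ball (0:ℂ) 1 \ {0}, 0 < g t)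
    (t : ℂ) (ht : t ∈ ball (0:ℂ) 1 \ {0}) :
    ‖wd (fun z => (Real.log (g z) : ℂ)) t‖ ≤
      (g t)⁻¹ * ∑ i ∈ Finset.range (N + 1),
        (2 * i * |Real.log (‖t‖ ^ 2)| ^ (i - 1) * |φ i t| / ‖t‖
          + |Real.log (‖t‖ ^ 2)| ^ i * ‖fderiv ℝ (φ i) t‖) := by
  obtain ⟨ht1, ht0'⟩ := ht
  have ht0 : t ≠ 0 := ht0'
  have hat : 0 < ‖t‖ := norm_pos_iff.mpr ht0
  have hnt : 0 < Complex.normSq t := Complex.normSq_pos.mpr ht0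
  set L : ℝ := Real.log (‖t‖ ^ 2) with hLdef
  set Dn : ℂ →L[ℝ] ℝ :=
    (Complex.normSq t)⁻¹ • ((2 * t.re) • Complex.reCLM + (2 * t.im) • Complex.imCLM) with hDndef
  have hDn0 : HasFDerivAt Complex.normSq
      (((2 * t.re) • Complex.reCLM + (2 * t.im) • Complex.imCLM : ℂ →L[ℝ] ℝ)) t := by
    have h1 := ((Complex.reCLM : ℂ →L[ℝ] ℝ).hasFDerivAt (x := t)).mul
      ((Complex.reCLM : ℂ →L[ℝ] ℝ).hasFDerivAt (x := t))
    have h2 := ((Complex.imCLM : ℂ →L[ℝ] ℝ).hasFDerivAt (x := t)).mul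
      ((Complex.imCLM : ℂ →L[ℝ] ℝ).hasFDerivAt (x := t))
    have h3 := h1.add h2
    have heq : Complex.normSq = fun z : ℂ =>
        Complex.reCLM z * Complex.reCLM z + Complex.imCLM z * Complex.imCLM z := by
      funext z; simp [Complex.normSq_apply]
    rw [heq]
    refine h3.congr_fderiv ?_
    refine ContinuousLinearMap.ext fun v => ?_
    simp
    ring
  have hL : HasFDerivAt (fun z : ℂ => Real.log (‖z‖ ^ 2)) Dn t := by
    have heq : (fun z : ℂ => Real.log (‖z‖ ^ 2))
        = fun z => Real.log (Complex.normSq z) := by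
      funext z; rw [Complex.sq_norm]
    rw [heq, hDndef]
    exact (Real.hasDerivAt_log hnt.ne').comp_hasFDerivAt t hDn0
  have hφd : ∀ i ≤ N, HasFDerivAt (φ i) (fderiv ℝ (φ i) t) t := fun i hi =>
    (((hφ i hi).contDiffAt (isOpen_ball.mem_nhds ht1)).differentiableAt (by simp)).hasFDerivAt
  set F : ℂ →L[ℝ] ℝ := ∑ i ∈ Finset.range (N + 1),
      ((L ^ i) • fderiv ℝ (φ i) t + (φ i t) • (((i : ℝ) * L ^ (i - 1)) • Dn)) with hFdef
  have hFd : HasFDerivAt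
      (fun z => ∑ i ∈ Finset.range (N + 1), Real.log (‖z‖ ^ 2) ^ i * φ i z) F t := by
    apply HasFDerivAt.fun_sum
    intro i hi
    exact ((hasDerivAt_pow i L).comp_hasFDerivAt t hL).mul
      (hφd i (Finset.mem_range_succ_iff.mp hi))
  have hgF : HasFDerivAt g F t := by
    apply hFd.congr_of_eventuallyEq
    have hmem : (ball (0:ℂ) 1 \ {0}) ∈ 𝓝 t :=
      (isOpen_ball.sdiff isClosed_singleton).mem_nhds ⟨ht1, ht0'⟩
    filter_upwards [hmem] with z hz
    exact hg z hz
  have hgt : 0 < g t := hpos t ⟨ht1, ht0'⟩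
  have hlog : HasFDerivAt (fun z => Real.log (g z)) ((g t)⁻¹ • F) t :=
    (Real.hasDerivAt_log hgt.ne').comp_hasFDerivAt t hgF
  have hC : HasFDerivAt (fun z => (Real.log (g z) : ℂ))
      (Complex.ofRealCLM.comp ((g t)⁻¹ • F)) t := Complex.ofRealCLM.hasFDerivAt.comp t hlog
  have hfd : fderiv ℝ (fun z => (Real.log (g z) : ℂ)) t
      = Complex.ofRealCLM.comp ((g t)⁻¹ • F) := hC.fderiv
  rw [wd, hfd]
  set B : ℝ := ∑ i ∈ Finset.range (N + 1),
      (2 * i * |L| ^ (i - 1) * |φ i t| / ‖t‖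
        + |L| ^ i * ‖fderiv ℝ (φ i) t‖) with hBdef
  have hFval : ∀ v : ℂ, ‖v‖ ≤ 1 → |2 * t.re * v.re + 2 * t.im * v.im| ≤ 2 * ‖t‖ →
      |F v| ≤ B := by
    intro v hv hDv
    have hFv : F v = ∑ i ∈ Finset.range (N + 1),
        (L ^ i * (fderiv ℝ (φ i) t v)
          + φ i t * ((i : ℝ) * L ^ (i - 1) * ((Complex.normSq t)⁻¹ * (2 * t.re * v.re + 2 * t.im * v.im)))) := by
      rw [hFdef]
      rw [ContinuousLinearMap.sum_apply]
      refine Finset.sum_congr rfl fun i _ => ?_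
      simp [hDndef, smul_eq_mul]
      ring
    rw [hFv, hBdef]
    refine (Finset.abs_sum_le_sum_abs _ _).trans (Finset.sum_le_sum ?_)
    intro i _
    refine (abs_add_le _ _).trans ?_
    have h1 : |L ^ i * (fderiv ℝ (φ i) t v)| ≤ |L| ^ i * ‖fderiv ℝ (φ i) t‖ := by
      rw [abs_mul, _root_.abs_pow]
      gcongr
      calc |(fderiv ℝ (φ i) t) v| = ‖(fderiv ℝ (φ i) t) v‖ := (Real.norm_eq_abs _).symm
        _ ≤ ‖fderiv ℝ (φ i) t‖ * ‖v‖ := ContinuousLinearMap.le_opNorm _ _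
        _ ≤ ‖fderiv ℝ (φ i) t‖ * 1 := by gcongr
        _ = ‖fderiv ℝ (φ i) t‖ := mul_one _
    have h2 : |φ i t * ((i : ℝ) * L ^ (i - 1) * ((Complex.normSq t)⁻¹ * (2 * t.re * v.re + 2 * t.im * v.im)))|
        ≤ 2 * i * |L| ^ (i - 1) * |φ i t| / ‖t‖ := by
      calc |φ i t * ((i : ℝ) * L ^ (i - 1) * ((Complex.normSq t)⁻¹ * (2 * t.re * v.re + 2 * t.im * v.im)))|
          = |φ i t| * ((i : ℝ) * |L| ^ (i - 1) * ((Complex.normSq t)⁻¹ * |2 * t.re * v.re + 2 * t.im * v.im|)) := by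
            rw [abs_mul, abs_mul, abs_mul, _root_.abs_pow, Nat.abs_cast, abs_mul,
              _root_.abs_of_nonneg (inv_nonneg.mpr hnt.le)]
        _ ≤ |φ i t| * ((i : ℝ) * |L| ^ (i - 1) * ((Complex.normSq t)⁻¹ * (2 * ‖t‖))) := by
            gcongr
        _ = 2 * i * |L| ^ (i - 1) * |φ i t| / ‖t‖ := by
            rw [Complex.normSq_eq_norm_sq]
            field_simp
    linarith
  have hF1 : |F 1| ≤ B := by
    refine hFval 1 (by simp) ?_
    simp only [Complex.one_re, Complex.one_im, mul_one, mul_zero, add_zero]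
    rw [abs_mul, _root_.abs_two]
    have := Complex.abs_re_le_norm t
    linarith
  have hFI : |F Complex.I| ≤ B := by
    refine hFval Complex.I (by simp) ?_
    simp only [Complex.I_re, Complex.I_im, mul_one, mul_zero, zero_add]
    rw [abs_mul, _root_.abs_two]
    have := Complex.abs_im_le_norm t
    linarith
  -- final combination
  have happly : ∀ v : ℂ, (Complex.ofRealCLM.comp ((g t)⁻¹ • F)) v = (((g t)⁻¹ * F v : ℝ) : ℂ) := by
    intro v; simp
  simp only [happly]
  have hinv : (0:ℝ) ≤ (g t)⁻¹ := inv_nonneg.mpr hgt.le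
  have hB : 0 ≤ B := le_trans (abs_nonneg _) hF1
  have tri : ‖(((g t)⁻¹ * F 1 : ℝ) : ℂ) - Complex.I * (((g t)⁻¹ * F Complex.I : ℝ) : ℂ)‖
      ≤ (g t)⁻¹ * |F 1| + (g t)⁻¹ * |F Complex.I| := by
    have := norm_add_le ((((g t)⁻¹ * F 1 : ℝ) : ℂ)) (-(Complex.I * (((g t)⁻¹ * F Complex.I : ℝ) : ℂ)))
    rw [← sub_eq_add_neg, norm_neg] at this
    refine this.trans ?_
    rw [norm_mul, Complex.norm_I, one_mul, Complex.norm_real, Complex.norm_real,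
      Real.norm_eq_abs, Real.norm_eq_abs, abs_mul, abs_mul, _root_.abs_of_nonneg hinv]
  rw [norm_mul]
  have habs12 : ‖(1/2 : ℂ)‖ = 1/2 := by
    rw [norm_div, norm_one]
    simp
  rw [habs12]
  have m1 : (g t)⁻¹ * |F 1| ≤ (g t)⁻¹ * B := mul_le_mul_of_nonneg_left hF1 hinv
  have m2 : (g t)⁻¹ * |F Complex.I| ≤ (g t)⁻¹ * B := mul_le_mul_of_nonneg_left hFI hinv
  linarith [tri.trans (by linarith : (g t)⁻¹ * |F 1| + (g t)⁻¹ * |F Complex.I| ≤ 2 * ((g t)⁻¹ * B))]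

lemma sum_lower (N ℓ : ℕ) (hℓN : ℓ ≤ N) (M c a L : ℝ) (p : ℕ → ℝ)
    (hM1 : 1 ≤ M) (hc : 0 < c) (ha : 0 < a)
    (hΛ1 : 1 ≤ |L|) (hΛbig : 8 * ((N:ℝ) + 1) * M / c ≤ |L|)
    (hp : ∀ i ≤ N, |p i| ≤ M) (hpl : c / 2 ≤ |p ℓ|)
    (hps : ∀ i ≤ N, ℓ < i → |p i| ≤ M * a)
    (hQ2 : a * |L| ^ N ≤ c / (8 * ((N:ℝ) + 1) * M)) :
    c / 4 * |L| ^ ℓ ≤ |∑ i ∈ Finset.range (N + 1), L ^ i * p i| := by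
  have hM0 : (0:ℝ) < M := lt_of_lt_of_le one_pos hM1
  have hN1 : (0:ℝ) < 8 * ((N:ℝ) + 1) := by positivity
  have hpowℓ : (1:ℝ) ≤ |L| ^ ℓ := by
    have := pow_le_pow_left₀ (by norm_num : (0:ℝ) ≤ 1) hΛ1 ℓ
    simpa using this
  have hmem : ℓ ∈ Finset.range (N + 1) := Finset.mem_range_succ_iff.mpr hℓN
  have hsplit : L ^ ℓ * p ℓ + ∑ i ∈ (Finset.range (N + 1)).erase ℓ, L ^ i * p i
      = ∑ i ∈ Finset.range (N + 1), L ^ i * p i :=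
    Finset.add_sum_erase _ (fun i => L ^ i * p i) hmem
  have hT : c / 2 * |L| ^ ℓ ≤ |L ^ ℓ * p ℓ| := by
    rw [abs_mul, _root_.abs_pow]
    calc c / 2 * |L| ^ ℓ = |L| ^ ℓ * (c / 2) := by ring
      _ ≤ |L| ^ ℓ * |p ℓ| := by gcongr
  have hterm : ∀ i ∈ (Finset.range (N + 1)).erase ℓ,
      |L ^ i * p i| ≤ c / (8 * ((N:ℝ) + 1)) * |L| ^ ℓ := by
    intro i hi
    obtain ⟨hne, hiN⟩ := Finset.mem_erase.mp hi
    have hiN' : i ≤ N := Finset.mem_range_succ_iff.mp hiN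
    rw [abs_mul, _root_.abs_pow]
    have hMle : M ≤ c / (8 * ((N:ℝ) + 1)) * |L| := by
      rw [div_le_iff₀ hc] at hΛbig
      rw [div_mul_eq_mul_div, le_div_iff₀ hN1]
      nlinarith
    rcases lt_or_gt_of_ne hne with hlt | hgt
    · obtain ⟨m, rfl⟩ : ∃ m, ℓ = m + 1 :=
        ⟨ℓ - 1, (Nat.succ_pred_eq_of_pos (by omega)).symm⟩
      have h1 : |L| ^ i ≤ |L| ^ m := pow_le_pow_right₀ hΛ1 (by omega)
      calc |L| ^ i * |p i| ≤ |L| ^ m * M := by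
            have h4 := hp i hiN'
            have := abs_nonneg (p i)
            gcongr
        _ ≤ |L| ^ m * (c / (8 * ((N:ℝ) + 1)) * |L|) := by gcongr
        _ = c / (8 * ((N:ℝ) + 1)) * |L| ^ (m + 1) := by ring
    · have h1 : |L| ^ i ≤ |L| ^ N := pow_le_pow_right₀ hΛ1 hiN'
      calc |L| ^ i * |p i| ≤ |L| ^ N * (M * a) := by
            have h4 := hps i hiN' hgt
            have := abs_nonneg (p i)
            gcongr
        _ = M * (a * |L| ^ N) := by ring
        _ ≤ M * (c / (8 * ((N:ℝ) + 1) * M)) := by gcongr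
        _ = c / (8 * ((N:ℝ) + 1)) := by field_simp
        _ ≤ c / (8 * ((N:ℝ) + 1)) * |L| ^ ℓ := le_mul_of_one_le_right (by positivity) hpowℓ
  have hR : |∑ i ∈ (Finset.range (N + 1)).erase ℓ, L ^ i * p i| ≤ c / 8 * |L| ^ ℓ := by
    refine (Finset.abs_sum_le_sum_abs _ _).trans ?_
    refine (Finset.sum_le_card_nsmul _ _ _ hterm).trans ?_
    rw [Finset.card_erase_of_mem hmem, Finset.card_range, Nat.add_sub_cancel, nsmul_eq_mul]
    have heq : (N:ℝ) * (c / (8 * ((N:ℝ) + 1)) * |L| ^ ℓ) = (N:ℝ) * c * |L| ^ ℓ / (8 * ((N:ℝ) + 1)) := by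
      ring
    rw [heq, div_le_iff₀ hN1]
    have h0 : (0:ℝ) ≤ c * |L| ^ ℓ := by positivity
    have h5 : (0:ℝ) ≤ (N:ℝ) := Nat.cast_nonneg N
    nlinarith
  have htri : |L ^ ℓ * p ℓ| ≤ |∑ i ∈ Finset.range (N + 1), L ^ i * p i|
      + |∑ i ∈ (Finset.range (N + 1)).erase ℓ, L ^ i * p i| := by
    have heq : L ^ ℓ * p ℓ = (∑ i ∈ Finset.range (N + 1), L ^ i * p i)
        - ∑ i ∈ (Finset.range (N + 1)).erase ℓ, L ^ i * p i := by linarith [hsplit]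
    rw [heq, sub_eq_add_neg]
    exact (abs_add_le _ _).trans (by rw [abs_neg])
  nlinarith [hT, hR, htri, hpowℓ, hc.le]

lemma sum_upper (N ℓ : ℕ) (hℓN : ℓ ≤ N) (M a Λ : ℝ) (p q : ℕ → ℝ)
    (hM1 : 1 ≤ M) (ha : 0 < a) (hΛ : 1 ≤ Λ)
    (hp : ∀ i ≤ N, |p i| ≤ M) (hq : ∀ i ≤ N, q i ≤ M) (hq0 : ∀ i, 0 ≤ q i)
    (hps : ∀ i ≤ N, ℓ < i → |p i| ≤ M * a)
    (hQ3 : M * (a * Λ ^ (N + 1)) ≤ 1) :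
    (∑ i ∈ Finset.range (N + 1), (2 * i * Λ ^ (i - 1) * |p i| / a + Λ ^ i * q i)) * (a * Λ)
      ≤ ((N:ℝ) + 1) * (2 * N * M + 2 * N + 1) * Λ ^ ℓ := by
  have hM0 : (0:ℝ) < M := lt_of_lt_of_le one_pos hM1
  have hΛ0 : (0:ℝ) < Λ := lt_of_lt_of_le one_pos hΛ
  have hN0 : (0:ℝ) ≤ 2 * (N:ℝ) := by positivity
  have hpowℓ : (1:ℝ) ≤ Λ ^ ℓ := by
    have := pow_le_pow_left₀ (by norm_num : (0:ℝ) ≤ 1) hΛ ℓ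
    simpa using this
  rw [Finset.sum_mul]
  have hbound : ∀ i ∈ Finset.range (N + 1),
      (2 * i * Λ ^ (i - 1) * |p i| / a + Λ ^ i * q i) * (a * Λ)
        ≤ (2 * N * M + 2 * N + 1) * Λ ^ ℓ := by
    intro i hi
    have hiN : i ≤ N := Finset.mem_range_succ_iff.mp hi
    have hiNr : (i:ℝ) ≤ (N:ℝ) := Nat.cast_le.mpr hiN
    have h2 : Λ ^ i * q i * (a * Λ) ≤ Λ ^ ℓ := by
      have hpw : Λ ^ (i + 1) ≤ Λ ^ (N + 1) := pow_le_pow_right₀ hΛ (by omega)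
      calc Λ ^ i * q i * (a * Λ) = q i * (a * Λ ^ (i + 1)) := by ring
        _ ≤ M * (a * Λ ^ (N + 1)) := by
            have := hq i hiN
            have := hq0 i
            gcongr
        _ ≤ 1 := hQ3
        _ ≤ Λ ^ ℓ := hpowℓ
    have h1 : 2 * i * Λ ^ (i - 1) * |p i| / a * (a * Λ) ≤ (2 * N * M + 2 * N) * Λ ^ ℓ := by
      rcases Nat.eq_zero_or_pos i with rfl | hi0
      · simp
        positivity
      · have hre : 2 * i * Λ ^ (i - 1) * |p i| / a * (a * Λ) = 2 * i * Λ ^ i * |p i| := by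
          have hps' : Λ ^ (i - 1) * Λ = Λ ^ i := by
            rw [← pow_succ]
            congr 1
            omega
          field_simp
          rw [← hps']
          ring
        rw [hre]
        rcases le_or_gt i ℓ with hil | hgt
        · have h3 : Λ ^ i ≤ Λ ^ ℓ := pow_le_pow_right₀ hΛ hil
          have h4 := hp i hiN
          have h6 := abs_nonneg (p i)
          calc 2 * i * Λ ^ i * |p i| ≤ 2 * N * Λ ^ ℓ * M := by gcongr
            _ = 2 * N * M * Λ ^ ℓ := by ring
            _ ≤ (2 * N * M + 2 * N) * Λ ^ ℓ := by nlinarith [mul_nonneg hN0 (pow_nonneg hΛ0.le ℓ)]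
        · have h3 : Λ ^ i ≤ Λ ^ (N + 1) := pow_le_pow_right₀ hΛ (by omega)
          have h4 := hps i hiN hgt
          have h6 := abs_nonneg (p i)
          calc 2 * i * Λ ^ i * |p i| ≤ 2 * N * Λ ^ (N + 1) * (M * a) := by gcongr
            _ = 2 * N * (M * (a * Λ ^ (N + 1))) := by ring
            _ ≤ 2 * N * 1 := mul_le_mul_of_nonneg_left hQ3 hN0
            _ ≤ 2 * N * Λ ^ ℓ := by nlinarith
            _ ≤ (2 * N * M + 2 * N) * Λ ^ ℓ := by
                nlinarith [mul_nonneg (mul_nonneg hN0 hM0.le) (pow_nonneg hΛ0.le ℓ)]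
    calc (2 * i * Λ ^ (i - 1) * |p i| / a + Λ ^ i * q i) * (a * Λ)
        = 2 * i * Λ ^ (i - 1) * |p i| / a * (a * Λ) + Λ ^ i * q i * (a * Λ) := by ring
      _ ≤ (2 * N * M + 2 * N) * Λ ^ ℓ + Λ ^ ℓ := by linarith
      _ = (2 * N * M + 2 * N + 1) * Λ ^ ℓ := by ring
  refine (Finset.sum_le_card_nsmul _ _ _ hbound).trans ?_
  rw [Finset.card_range, nsmul_eq_mul]
  push_cast
  exact le_of_eq (by ring)

theorem statement6 (N : ℕ) (φ : ℕ → ℂ → ℝ)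
    (hφ : ∀ i ≤ N, ContDiffOn ℝ (⊤ : ℕ∞) (φ i) (ball (0:ℂ) 1))
    (g : ℂ → ℝ)
    (hg : ∀ t ∈ ball (0:ℂ) 1 \ {0},
      g t = ∑ i ∈ Finset.range (N + 1), Real.log (‖t‖ ^ 2) ^ i * φ i t)
    (hpos : ∀ t ∈ ball (0:ℂ) 1 \ {0}, 0 < g t)
    (ℓ : ℕ) (hℓN : ℓ ≤ N) (hℓ0 : φ ℓ 0 ≠ 0)
    (hmax : ∀ i, ℓ < i → i ≤ N → φ i 0 = 0) :
    ∃ C > 0, ∃ δ > 0, ∀ t : ℂ, 0 < ‖t‖ → ‖t‖ < δ →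
      ‖wd (fun z => (Real.log (g z) : ℂ)) t‖
        ≤ C / (‖t‖ * (-Real.log ‖t‖)) := by
  classical
  have h0mem : (0:ℂ) ∈ ball (0:ℂ) 1 := mem_ball_self one_pos
  set l : Filter ℂ := 𝓝[≠] (0:ℂ) with hl
  set A : ℂ → ℝ := fun t => -Real.log (‖t‖) with hAdef
  -- basic eventualities
  have hev_ne : ∀ᶠ t in l, t ≠ (0:ℂ) := eventually_mem_nhdsWithin
  have hev_ball : ∀ᶠ t in l, t ∈ ball (0:ℂ) 1 \ {0} := by
    have h1 : ∀ᶠ t in 𝓝 (0:ℂ), t ∈ ball (0:ℂ) 1 :=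
      isOpen_ball.eventually_mem h0mem
    filter_upwards [h1.filter_mono nhdsWithin_le_nhds, hev_ne] with t ht hne
    exact ⟨ht, hne⟩
  have habs0 : Tendsto (fun t : ℂ => ‖t‖) l (𝓝[>] 0) := by
    rw [tendsto_nhdsWithin_iff]
    constructor
    · have : Tendsto (fun t : ℂ => ‖t‖) (𝓝 0) (𝓝 0) := by
        simpa using continuous_norm.tendsto (0:ℂ)
      exact this.mono_left nhdsWithin_le_nhds
    · filter_upwards [hev_ne] with t ht
      exact norm_pos_iff.mpr ht
  have hA : Tendsto A l atTop := by
    have h1 : Tendsto (fun t : ℂ => Real.log (‖t‖)) l atBot :=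
      Real.tendsto_log_nhdsGT_zero.comp habs0
    exact tendsto_neg_atBot_atTop.comp h1
  have hApos : ∀ᶠ t in l, 0 < A t := hA.eventually_gt_atTop 0
  have hsmall : ∀ k : ℕ, Tendsto (fun t => ‖t‖ * A t ^ k) l (𝓝 0) := by
    intro k
    have h2 : Tendsto (fun y : ℝ => Real.exp (-y) * y ^ k) atTop (𝓝 0) := by
      simpa [mul_comm] using Real.tendsto_pow_mul_exp_neg_atTop_nhds_zero k
    have h3 := h2.comp hA
    refine h3.congr' ?_
    filter_upwards [hev_ne] with t ht
    have hat : 0 < ‖t‖ := norm_pos_iff.mpr ht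
    simp only [Function.comp, hAdef, neg_neg]
    rw [Real.exp_log hat]
  -- per-index bounds
  have hMi : ∀ i : ℕ, ∃ Mi : ℝ, ∀ᶠ t in l, i ≤ N →
      (|φ i t| ≤ Mi ∧ ‖fderiv ℝ (φ i) t‖ ≤ Mi ∧ (ℓ < i → |φ i t| ≤ Mi * ‖t‖)) := by
    intro i
    by_cases hiN : i ≤ N
    · have hc1 : ContinuousAt (φ i) 0 :=
        ((hφ i hiN).continuousOn).continuousAt (isOpen_ball.mem_nhds h0mem)
      have hev1 : ∀ᶠ t in 𝓝 (0:ℂ), |φ i t| < |φ i 0| + 1 := by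
        have ht1 : Tendsto (fun t => |φ i t|) (𝓝 (0:ℂ)) (𝓝 |φ i 0|) :=
          (_root_.continuous_abs.tendsto _).comp hc1
        exact ht1.eventually_lt_const (lt_add_one _)
      have hfc : ContinuousAt (fderiv ℝ (φ i)) 0 :=
        ((hφ i hiN).continuousOn_fderiv_of_isOpen isOpen_ball (by simp)).continuousAt
          (isOpen_ball.mem_nhds h0mem)
      have hev2 : ∀ᶠ t in 𝓝 (0:ℂ), ‖fderiv ℝ (φ i) t‖ < ‖fderiv ℝ (φ i) 0‖ + 1 :=
        hfc.norm.eventually_lt_const (lt_add_one _)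
      by_cases hi : ℓ < i
      · have hφ0 : φ i 0 = 0 := hmax i hi hiN
        have hCD1 : ContDiffAt ℝ 1 (φ i) 0 :=
          ((hφ i hiN).contDiffAt (isOpen_ball.mem_nhds h0mem)).of_le (by simp)
        obtain ⟨K, s, hs, hlip⟩ := hCD1.exists_lipschitzOnWith
        have h0s : (0:ℂ) ∈ s := mem_of_mem_nhds hs
        have hev3 : ∀ᶠ t in 𝓝 (0:ℂ), |φ i t| ≤ (K:ℝ) * ‖t‖ := by
          filter_upwards [hs] with t hts
          have hd := hlip.dist_le_mul t hts 0 h0s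
          rw [Real.dist_eq, hφ0, sub_zero] at hd
          simpa [Complex.dist_eq] using hd
        refine ⟨max (|φ i 0| + 1) (max (‖fderiv ℝ (φ i) 0‖ + 1) K), ?_⟩
        filter_upwards [(hev1.and (hev2.and hev3)).filter_mono
          (nhdsWithin_le_nhds : l ≤ 𝓝 0)] with t hh _
        obtain ⟨h1, h2, h3⟩ := hh
        refine ⟨h1.le.trans (le_max_left _ _),
          h2.le.trans ((le_max_left _ _).trans (le_max_right _ _)), fun _ => h3.trans ?_⟩
        have : (K:ℝ) ≤ max (|φ i 0| + 1) (max (‖fderiv ℝ (φ i) 0‖ + 1) K) :=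
          (le_max_right _ _).trans (le_max_right _ _)
        exact mul_le_mul_of_nonneg_right this (norm_nonneg t)
      · refine ⟨max (|φ i 0| + 1) (‖fderiv ℝ (φ i) 0‖ + 1), ?_⟩
        filter_upwards [(hev1.and hev2).filter_mono
          (nhdsWithin_le_nhds : l ≤ 𝓝 0)] with t hh _
        obtain ⟨h1, h2⟩ := hh
        exact ⟨h1.le.trans (le_max_left _ _), h2.le.trans (le_max_right _ _),
          fun hlt => absurd hlt hi⟩
    · exact ⟨0, Filter.Eventually.of_forall fun t h => absurd h hiN⟩
  choose Mf hMf using hMi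
  set M : ℝ := 1 + ∑ i ∈ Finset.range (N + 1), |Mf i| with hMdef
  have hsumnn : 0 ≤ ∑ i ∈ Finset.range (N + 1), |Mf i| :=
    Finset.sum_nonneg fun i _ => abs_nonneg _
  have hM1 : 1 ≤ M := by rw [hMdef]; linarith
  have hM0 : 0 < M := lt_of_lt_of_le one_pos hM1
  have hMle : ∀ i ≤ N, Mf i ≤ M := by
    intro i hi
    have h1 : |Mf i| ≤ ∑ j ∈ Finset.range (N + 1), |Mf j| :=
      Finset.single_le_sum (f := fun j => |Mf j|) (fun j _ => abs_nonneg _)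
        (Finset.mem_range_succ_iff.mpr hi)
    calc Mf i ≤ |Mf i| := le_abs_self _
      _ ≤ M := by rw [hMdef]; linarith
  have hMev : ∀ᶠ t in l, ∀ i ≤ N,
      |φ i t| ≤ M ∧ ‖fderiv ℝ (φ i) t‖ ≤ M ∧ (ℓ < i → |φ i t| ≤ M * ‖t‖) := by
    have hall : ∀ᶠ t in l, ∀ i ∈ Finset.range (N + 1), i ≤ N →
        (|φ i t| ≤ Mf i ∧ ‖fderiv ℝ (φ i) t‖ ≤ Mf i ∧
          (ℓ < i → |φ i t| ≤ Mf i * ‖t‖)) :=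
      (Finset.eventually_all _).mpr fun i _ => hMf i
    filter_upwards [hall] with t hh i hi
    obtain ⟨h1, h2, h3⟩ := hh i (Finset.mem_range_succ_iff.mpr hi) hi
    refine ⟨h1.trans (hMle i hi), h2.trans (hMle i hi), fun hlt => (h3 hlt).trans ?_⟩
    exact mul_le_mul_of_nonneg_right (hMle i hi) (norm_nonneg t)
  -- constants
  set c : ℝ := |φ ℓ 0| with hcdef
  have hcpos : 0 < c := abs_pos.mpr hℓ0
  have hevc : ∀ᶠ t in l, c / 2 ≤ |φ ℓ t| := by
    have hc1 : ContinuousAt (φ ℓ) 0 :=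
      ((hφ ℓ hℓN).continuousOn).continuousAt (isOpen_ball.mem_nhds h0mem)
    have ht1 : Tendsto (fun t => |φ ℓ t|) (𝓝 (0:ℂ)) (𝓝 c) :=
      (_root_.continuous_abs.tendsto _).comp hc1
    have := ht1.eventually_const_lt (by linarith : c / 2 < c)
    filter_upwards [this.filter_mono (nhdsWithin_le_nhds : l ≤ 𝓝 0)] with t ht
    exact ht.le
  set K₁ : ℝ := ((N:ℝ) + 1) * (2 * N * M + 2 * N + 1) with hK₁def
  have hK₁pos : 0 < K₁ := by rw [hK₁def]; positivity
  set C : ℝ := 4 * K₁ / c with hCdef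
  have hCpos : 0 < C := by rw [hCdef]; positivity
  refine ⟨C, hCpos, ?_⟩
  -- eventual smallness
  have hevA : ∀ᶠ t in l, max 1 (8 * ((N:ℝ) + 1) * M / c) ≤ A t :=
    hA.eventually_ge_atTop _
  have hq1 : ∀ᶠ t in l, ‖t‖ * (2 * A t) ^ N < c / (8 * ((N:ℝ) + 1) * M) := by
    have ht : Tendsto (fun t => ‖t‖ * (2 * A t) ^ N) l (𝓝 0) := by
      have := (hsmall N).const_mul ((2:ℝ) ^ N)
      rw [mul_zero] at this
      refine this.congr ?_
      intro t
      rw [mul_pow]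
      ring
    exact ht.eventually_lt_const (by positivity)
  have hq2 : ∀ᶠ t in l, ‖t‖ * (2 * A t) ^ (N + 1) < 1 / M := by
    have ht : Tendsto (fun t => ‖t‖ * (2 * A t) ^ (N + 1)) l (𝓝 0) := by
      have := (hsmall (N + 1)).const_mul ((2:ℝ) ^ (N + 1))
      rw [mul_zero] at this
      refine this.congr ?_
      intro t
      rw [mul_pow]
      ring
    exact ht.eventually_lt_const (by positivity)
  -- the main eventual estimate
  have EV : ∀ᶠ t in l, ‖wd (fun z => (Real.log (g z) : ℂ)) t‖
      ≤ C / (‖t‖ * (-Real.log (‖t‖))) := by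
    filter_upwards [hev_ball, hMev, hevc, hevA, hq1, hq2, hApos]
      with t ht hM' hφℓ hAge hq1' hq2' hA0
    obtain ⟨ht1, ht0'⟩ := ht
    have ht0 : t ≠ 0 := ht0'
    have hat : 0 < ‖t‖ := norm_pos_iff.mpr ht0
    have ha1 : ‖t‖ < 1 := by
      have := mem_ball.mp ht1
      rwa [Complex.dist_eq, sub_zero] at this
    have hloga : Real.log (‖t‖) < 0 := Real.log_neg hat ha1
    have hΛeq : Real.log (‖t‖ ^ 2) = 2 * Real.log (‖t‖) := by
      rw [Real.log_pow]
      push_cast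
      ring
    have hΛval : |Real.log (‖t‖ ^ 2)| = 2 * A t := by
      rw [hΛeq, abs_of_neg (by linarith), hAdef]
      ring
    have hΛ1 : 1 ≤ |Real.log (‖t‖ ^ 2)| := by
      rw [hΛval]
      have := (le_max_left 1 (8 * ((N:ℝ) + 1) * M / c)).trans hAge
      linarith
    have hΛbig : 8 * ((N:ℝ) + 1) * M / c ≤ |Real.log (‖t‖ ^ 2)| := by
      rw [hΛval]
      have := (le_max_right 1 (8 * ((N:ℝ) + 1) * M / c)).trans hAge
      linarith [hA0]
    have hp : ∀ i ≤ N, |φ i t| ≤ M := fun i hi => (hM' i hi).1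
    have hq : ∀ i ≤ N, ‖fderiv ℝ (φ i) t‖ ≤ M := fun i hi => (hM' i hi).2.1
    have hps : ∀ i ≤ N, ℓ < i → |φ i t| ≤ M * ‖t‖ :=
      fun i hi hlt => (hM' i hi).2.2 hlt
    have hgpos : 0 < g t := hpos t ⟨ht1, ht0'⟩
    have hQ2 : ‖t‖ * |Real.log (‖t‖ ^ 2)| ^ N
        ≤ c / (8 * ((N:ℝ) + 1) * M) := by
      rw [hΛval]
      exact hq1'.le
    have hQ3 : M * (‖t‖ * |Real.log (‖t‖ ^ 2)| ^ (N + 1)) ≤ 1 := by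
      rw [hΛval]
      rw [← le_div_iff₀' hM0]
      exact hq2'.le
    -- lower bound on g
    have hlow : c / 4 * |Real.log (‖t‖ ^ 2)| ^ ℓ ≤ g t := by
      have := sum_lower N ℓ hℓN M c (‖t‖) (Real.log (‖t‖ ^ 2))
        (fun i => φ i t) hM1 hcpos hat hΛ1 hΛbig hp hφℓ hps hQ2
      rwa [← hg t ⟨ht1, ht0'⟩, _root_.abs_of_pos hgpos] at this
    -- upper bound on numerator
    have hup := sum_upper N ℓ hℓN M (‖t‖) (|Real.log (‖t‖ ^ 2)|)
      (fun i => φ i t) (fun i => ‖fderiv ℝ (φ i) t‖) hM1 hat hΛ1 hp hq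
      (fun i => norm_nonneg _) hps hQ3
    have hbound := aux_deriv N φ hφ g hg hpos t ⟨ht1, ht0'⟩
    set B : ℝ := ∑ i ∈ Finset.range (N + 1),
        (2 * i * |Real.log (‖t‖ ^ 2)| ^ (i - 1) * |φ i t| / ‖t‖
          + |Real.log (‖t‖ ^ 2)| ^ i * ‖fderiv ℝ (φ i) t‖) with hBdef
    set Λ : ℝ := |Real.log (‖t‖ ^ 2)| with hΛdef
    refine hbound.trans ?_
    have hden : 0 < ‖t‖ * -Real.log (‖t‖) :=
      mul_pos hat (by linarith)
    rw [inv_mul_eq_div, div_le_div_iff₀ hgpos hden]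
    have hABΛ : B * (‖t‖ * -Real.log (‖t‖))
        = B * (‖t‖ * Λ) / 2 := by
      rw [hΛval]
      simp only [hAdef]
      ring
    have hKpow : 0 ≤ K₁ * Λ ^ ℓ := by positivity
    have h7 : C * (c / 4 * Λ ^ ℓ) ≤ C * g t := mul_le_mul_of_nonneg_left hlow hCpos.le
    have h8 : C * (c / 4 * Λ ^ ℓ) = K₁ * Λ ^ ℓ := by
      rw [hCdef]
      field_simp
    have h9 : B * (‖t‖ * Λ) ≤ K₁ * Λ ^ ℓ := hup
    linarith
  -- convert to δ-form
  obtain ⟨δ, hδ, hsub⟩ := Metric.mem_nhdsWithin_iff.mp EV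
  refine ⟨δ, hδ, fun t h0 hδ' => hsub ⟨?_, ?_⟩⟩
  · rw [mem_ball, Complex.dist_eq, sub_zero]
    exact hδ'
  · intro h
    rw [Set.mem_singleton_iff.mp h] at h0
    simp at h0
end

section
/- Let P(z, w) be a polynomial over ℂ, homogeneous of total degree m, such that P(z+1, w+1) = P(z, w) for all z, w ∈ ℂ. Then there is a constant C ∈ ℂ with P(z, w) = C·(z − w)^m. -/
/-!
Homogeneity of degree `m` gives `P (t • x) = t ^ m * P x`. Conjugating the unit translation by
the dilation `x ↦ t • x` turns invariance under `x ↦ x + 1` into invariance under `x ↦ x + t • 1`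
for every `t`, so `P (z, w) = P (z - w, 0) = (z - w) ^ m * P (1, 0)`.
-/

namespace MvPolynomial

theorem IsHomogeneous.eval_smul {R σ : Type*} [CommSemiring R] {φ : MvPolynomial σ R} {m : ℕ}
    (hφ : φ.IsHomogeneous m) (t : R) (x : σ → R) :
    eval (t • x) φ = t ^ m * eval x φ := by
  rw [eval_eq, eval_eq, Finset.mul_sum]
  refine Finset.sum_congr rfl fun d hd => ?_
  simp only [Pi.smul_apply, smul_eq_mul, mul_pow, Finset.prod_mul_distrib,
    Finset.prod_pow_eq_pow_sum, ← hφ.degree_eq_sum_deg_support hd]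
  ring

theorem IsHomogeneous.eval_add_smul_one {K σ : Type*} [Field K] {φ : MvPolynomial σ K} {m : ℕ}
    (hφ : φ.IsHomogeneous m) (hinv : ∀ x : σ → K, eval (x + 1) φ = eval x φ)
    (t : K) (x : σ → K) :
    eval (x + t • 1) φ = eval x φ := by
  rcases eq_or_ne t 0 with rfl | ht
  · simp
  have hx : x = t • t⁻¹ • x := by rw [smul_smul, mul_inv_cancel₀ ht, one_smul]
  calc eval (x + t • 1) φ = eval (t • (t⁻¹ • x + 1)) φ := by rw [smul_add, ← hx]
    _ = t ^ m * eval (t⁻¹ • x) φ := by rw [hφ.eval_smul, hinv]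
    _ = eval x φ := by rw [← hφ.eval_smul, ← hx]

end MvPolynomial

open MvPolynomial

theorem statement11 (m : ℕ) (P : MvPolynomial (Fin 2) ℂ)
    (hhom : P.IsHomogeneous m)
    (hinv : ∀ z w : ℂ, MvPolynomial.eval ![z + 1, w + 1] P = MvPolynomial.eval ![z, w] P) :
    ∃ C : ℂ, ∀ z w : ℂ, MvPolynomial.eval ![z, w] P = C * (z - w) ^ m := by
  have hunit_shift : ∀ x : Fin 2 → ℂ, eval (x + 1) P = eval x P := fun x => by
    have hx1 : x + 1 = ![x 0 + 1, x 1 + 1] := by funext i; fin_cases i <;> rfl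
    have hx : x = ![x 0, x 1] := by funext i; fin_cases i <;> rfl
    rw [hx1, hinv, ← hx]
  refine ⟨eval ![1, 0] P, fun z w => ?_⟩
  have hshift : ![z, w] = ![z - w, 0] + w • 1 := by funext i; fin_cases i <;> simp
  have hdilate : ![z - w, 0] = (z - w) • ![1, 0] := by funext i; fin_cases i <;> simp
  rw [hshift, hhom.eval_add_smul_one hunit_shift, hdilate, hhom.eval_smul, mul_comm]
end
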